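/- arXiv:1302.4588 — 2 statements merged into one kernel-verified Lean document; each statement's English description precedes it below -/
import Mathlib

section
/- Let C, C' ⊂ ℝ^{n+1} be convex bodies with B̄(0,2r) ⊂ C ∩ C' and C ∪ C' ⊂ B̄(0,R), where 0 < r < R. Let f : C → C' be the map defined by f(x) = x for |x| ≤ r, and f(x) = r·x/|x| + (|x|−r)·((ρ'(x/|x|)−r)/(ρ(x/|x|)−r))·x/|x| for |x| ≥ r, where ρ, ρ' are the radial functions of C and C'. Then f is bilipschitz and 1 ≤ Lip(f), Lip(f^{-1}) ≤ 1 + (R/r)(R/r − 1)((R/r)² + 1). -/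
open Set MeasureTheory Metric Filter
open scoped ENNReal NNReal Topology RealInnerProductSpace

noncomputable section

/-- A convex body: a compact convex set with nonempty interior. -/
def IsConvexBody {E : Type*} [NormedAddCommGroup E] [NormedSpace ℝ E] (C : Set E) : Prop :=
  IsCompact C ∧ Convex ℝ C ∧ (interior C).Nonempty

variable {n : ℕ}

/-- The divergence of a vector field on `ℝ^{n+1}`. -/
def divg (ξ : EuclideanSpace ℝ (Fin (n + 1)) → EuclideanSpace ℝ (Fin (n + 1)))
    (x : EuclideanSpace ℝ (Fin (n + 1))) : ℝ :=
  ∑ i, ⟪fderiv ℝ ξ x (EuclideanSpace.single i 1), EuclideanSpace.single i 1⟫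

/-- The perimeter of `E` relative to the open set `U`, defined variationally as the supremum
of `∫_E div ξ` over smooth vector fields `ξ` with compact support in `U` and `‖ξ‖ ≤ 1`. -/
def relPerimeter (U E : Set (EuclideanSpace ℝ (Fin (n + 1)))) : ℝ :=
  sSup { p : ℝ | ∃ ξ : EuclideanSpace ℝ (Fin (n + 1)) → EuclideanSpace ℝ (Fin (n + 1)),
    ContDiff ℝ (⊤ : ℕ∞) ξ ∧ HasCompactSupport ξ ∧ tsupport ξ ⊆ U ∧
    (∀ x, ‖ξ x‖ ≤ 1) ∧ p = ∫ x in E, divg ξ x }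

/-- The perimeter of `E ⊆ C` relative to the interior of `C`. -/
def perim (C E : Set (EuclideanSpace ℝ (Fin (n + 1)))) : ℝ :=
  relPerimeter (interior C) E

/-- The isoperimetric profile of `C`: the infimum of the relative perimeter in the interior
of `C` among measurable subsets of `C` of prescribed volume `v`. -/
def isopProfile (C : Set (EuclideanSpace ℝ (Fin (n + 1)))) (v : ℝ) : ℝ :=
  sInf { p : ℝ | ∃ E : Set (EuclideanSpace ℝ (Fin (n + 1))),
    E ⊆ C ∧ MeasurableSet E ∧ (volume E).toReal = v ∧ p = perim C E }

/-- The (smallest) Lipschitz constant of `f` on the set `s`. -/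
def lipConstOn {α β : Type*} [PseudoMetricSpace α] [PseudoMetricSpace β]
    (f : α → β) (s : Set α) : ℝ :=
  sInf { K : ℝ | 0 ≤ K ∧ ∀ x ∈ s, ∀ y ∈ s, dist (f x) (f y) ≤ K * dist x y }

/-- The Lipschitz distance between two sets: the infimum of
`log (max (Lip f) (Lip f⁻¹))` over bilipschitz maps `f : C → C'`. -/
def lipDist {E : Type*} [NormedAddCommGroup E] [NormedSpace ℝ E] (C C' : Set E) : ℝ :=
  sInf { d : ℝ | ∃ f g : E → E, MapsTo f C C' ∧ MapsTo g C' C ∧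
    (∀ x ∈ C, g (f x) = x) ∧ (∀ y ∈ C', f (g y) = y) ∧
    d = Real.log (max (lipConstOn f C) (lipConstOn g C')) }

/-- The weak Hausdorff distance: the infimum of Hausdorff distances over Euclidean isometries. -/
def weakHausdorffDist (C C' : Set (EuclideanSpace ℝ (Fin (n + 1)))) : ℝ :=
  sInf { d : ℝ | ∃ h : EuclideanSpace ℝ (Fin (n + 1)) ≃ᵢ EuclideanSpace ℝ (Fin (n + 1)),
    d = hausdorffDist C (h '' C') }

/-- The radial function of a convex body containing `0` in its interior:
`ρ(C,u) = max {t ≥ 0 : t • u ∈ C}`. -/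
def radialFn (C : Set (EuclideanSpace ℝ (Fin (n + 1)))) (u : EuclideanSpace ℝ (Fin (n + 1))) : ℝ :=
  sSup { t : ℝ | 0 ≤ t ∧ t • u ∈ C }

/-- The set of points of `C` where `E` has density one relative to `C`. -/
def densityOnePoints (C E : Set (EuclideanSpace ℝ (Fin (n + 1)))) :
    Set (EuclideanSpace ℝ (Fin (n + 1))) :=
  { x ∈ C | Tendsto (fun r : ℝ => volume (E ∩ ball x r ∩ C) / volume (ball x r ∩ C))
      (nhdsWithin 0 (Ioi 0)) (nhds 1) }

/-- The tangent cone (supporting cone) of `C` at `p`: the closure of the union of the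
dilations of `C` of center `p` and factor `λ > 0`. -/
def tangentConeOf (C : Set (EuclideanSpace ℝ (Fin (n + 1)))) (p : EuclideanSpace ℝ (Fin (n + 1))) :
    Set (EuclideanSpace ℝ (Fin (n + 1))) :=
  closure (⋃ l ∈ Ioi (0 : ℝ), (fun x => p + l • (x - p)) '' C)

/-- The solid angle `α(p)` of the tangent cone of `C` at `p`:
the n-dimensional Hausdorff measure of `∂B(p,1) ∩ int (C_p)`. -/
def solidAngle (C : Set (EuclideanSpace ℝ (Fin (n + 1)))) (p : EuclideanSpace ℝ (Fin (n + 1))) : ℝ :=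
  (μH[(n : ℝ)] (sphere p 1 ∩ interior (tangentConeOf C p))).toReal

/-- The density quotient `h(E,C,x,R)`. -/
def densRatio (E C : Set (EuclideanSpace ℝ (Fin (n + 1)))) (x : EuclideanSpace ℝ (Fin (n + 1)))
    (R : ℝ) : ℝ :=
  min (volume (E ∩ (ball x R ∩ C))).toReal (volume ((ball x R ∩ C) \ E)).toReal /
    (volume (ball x R ∩ C)).toReal

section AuxRadial

variable {n : ℕ} {C C' : Set (EuclideanSpace ℝ (Fin (n + 1)))} {r R : ℝ}
  {u v x y : EuclideanSpace ℝ (Fin (n + 1))}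
  {f : EuclideanSpace ℝ (Fin (n + 1)) → EuclideanSpace ℝ (Fin (n + 1))}

lemma radial_basic (hC : IsCompact C) (hr : 0 < r)
    (h2C : closedBall 0 (2*r) ⊆ C) (hCR : C ⊆ closedBall 0 R) (hu : ‖u‖ = 1) :
    2*r ≤ radialFn C u ∧ radialFn C u ≤ R ∧ radialFn C u • u ∈ C := by
  set S := { t : ℝ | 0 ≤ t ∧ t • u ∈ C } with hS
  have hmem2r : (2*r) ∈ S := by
    refine ⟨by positivity, h2C ?_⟩
    rw [mem_closedBall_zero_iff, norm_smul, hu, mul_one, Real.norm_eq_abs,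
      abs_of_nonneg (by positivity : (0:ℝ) ≤ 2*r)]
  have hub : ∀ t ∈ S, t ≤ R := by
    intro t ht
    have := hCR ht.2
    rwa [mem_closedBall_zero_iff, norm_smul, hu, mul_one, Real.norm_eq_abs,
      abs_of_nonneg ht.1] at this
  have hbdd : BddAbove S := ⟨R, hub⟩
  have hne : S.Nonempty := ⟨2*r, hmem2r⟩
  have hclosed : IsClosed S := by
    have : S = Ici (0:ℝ) ∩ (fun t : ℝ => t • u) ⁻¹' C := by
      ext t; simp [hS, mem_Ici]
    rw [this]
    exact isClosed_Ici.inter (hC.isClosed.preimage (by fun_prop))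
  have h3 : radialFn C u ∈ S := hclosed.csSup_mem hne hbdd
  exact ⟨le_csSup hbdd hmem2r, hub _ h3, h3.2⟩

lemma radial_star (hC : IsCompact C) (hconv : Convex ℝ C) (hr : 0 < r)
    (h2C : closedBall 0 (2*r) ⊆ C) (hCR : C ⊆ closedBall 0 R) (hu : ‖u‖ = 1)
    {t : ℝ} (ht0 : 0 ≤ t) (ht : t ≤ radialFn C u) : t • u ∈ C := by
  obtain ⟨h1, _, h3⟩ := radial_basic hC hr h2C hCR hu
  set a := radialFn C u with ha
  have ha0 : 0 < a := lt_of_lt_of_le (by positivity) h1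
  have h0C : (0 : EuclideanSpace ℝ (Fin (n+1))) ∈ C := h2C (by
    simp [mem_closedBall_zero_iff]; positivity)
  have := hconv h3 h0C (by positivity : 0 ≤ t/a) (by
    have : t/a ≤ 1 := (div_le_one ha0).2 ht
    linarith : 0 ≤ 1 - t/a) (by ring)
  simpa [smul_smul, div_mul_cancel₀ _ ha0.ne'] using this

lemma radial_ub (hC : IsCompact C) (hr : 0 < r)
    (h2C : closedBall 0 (2*r) ⊆ C) (hCR : C ⊆ closedBall 0 R)
    {x : EuclideanSpace ℝ (Fin (n+1))} (hx : x ∈ C) (hx0 : x ≠ 0) :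
    ‖x‖ ≤ radialFn C (‖x‖⁻¹ • x) := by
  have hnx : ‖x‖ ≠ 0 := norm_ne_zero_iff.2 hx0
  refine le_csSup ?_ ⟨norm_nonneg x, ?_⟩
  · refine ⟨R, fun t ht => ?_⟩
    have := hCR ht.2
    rw [mem_closedBall_zero_iff, norm_smul, norm_smul, norm_inv, norm_norm,
      inv_mul_cancel₀ hnx, mul_one, Real.norm_eq_abs, abs_of_nonneg ht.1] at this
    exact this
  · rw [smul_smul, mul_inv_cancel₀ hnx, one_smul]; exact hx

lemma radial_lip (hC : IsCompact C) (hconv : Convex ℝ C) (hr : 0 < r)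
    (h2C : closedBall 0 (2*r) ⊆ C) (hCR : C ⊆ closedBall 0 R)
    (hu : ‖u‖ = 1) (hv : ‖v‖ = 1) :
    radialFn C u - radialFn C v ≤ R^2/(2*r) * ‖u - v‖ := by
  obtain ⟨hu1, hu2, hu3⟩ := radial_basic hC hr h2C hCR hu
  obtain ⟨hv1, hv2, hv3⟩ := radial_basic (C := C) hC hr h2C hCR hv
  set a := radialFn C u with ha
  set d := ‖u - v‖ with hd
  have hd0 : 0 ≤ d := norm_nonneg _
  have ha0 : 0 < a := lt_of_lt_of_le (by positivity) hu1
  rcases eq_or_lt_of_le hd0 with hdz | hdpos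
  · have huv : u = v := by
      have : ‖u - v‖ = 0 := (hd ▸ hdz).symm
      rwa [norm_sub_eq_zero_iff] at this
    have hva : radialFn C v = a := by rw [ha, huv]
    rw [hva, sub_self]
    positivity
  · have hden : 0 < 2*r + a*d := by positivity
    have hzmem : ((2*r/d) • (v - u)) ∈ C := h2C (by
      rw [mem_closedBall_zero_iff, norm_smul, Real.norm_eq_abs,
        abs_of_nonneg (by positivity : (0:ℝ) ≤ 2*r/d), norm_sub_rev v u, ← hd,
        div_mul_cancel₀ _ hdpos.ne'])
    have hcomb := hconv hu3 hzmem
      (by positivity : (0:ℝ) ≤ 2*r/(2*r+a*d))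
      (by positivity : (0:ℝ) ≤ a*d/(2*r+a*d))
      (by field_simp)
    have heq : (2*r/(2*r+a*d)) • (a • u) + (a*d/(2*r+a*d)) • ((2*r/d) • (v - u))
        = (2*r*a/(2*r+a*d)) • v := by
      rw [smul_smul, smul_smul]
      have h1 : 2*r/(2*r+a*d) * a = 2*r*a/(2*r+a*d) := by ring
      have h2 : a*d/(2*r+a*d) * (2*r/d) = 2*r*a/(2*r+a*d) := by
        field_simp
      rw [h1, h2, smul_sub]
      abel
    rw [heq] at hcomb
    have hle : 2*r*a/(2*r+a*d) ≤ radialFn C v :=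
      le_csSup (by
        refine ⟨R, fun t ht => ?_⟩
        have := hCR ht.2
        rwa [mem_closedBall_zero_iff, norm_smul, hv, mul_one, Real.norm_eq_abs,
          abs_of_nonneg ht.1] at this)
        ⟨by positivity, hcomb⟩
    have key : a - 2*r*a/(2*r+a*d) ≤ R^2/(2*r) * d := by
      rw [sub_div' hden.ne', div_le_iff₀ hden]
      have h1 : a^2*d ≤ R^2*d := by
        nlinarith [mul_nonneg (mul_nonneg (sub_nonneg.2 hu2)
          (show (0:ℝ) ≤ R + a by linarith)) hd0]
      have h2 : R^2/(2*r)*d*(2*r) = R^2*d := by field_simp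
      have h3 : 0 ≤ R^2/(2*r)*d*(a*d) :=
        mul_nonneg (mul_nonneg (by positivity) hd0) (by positivity)
      nlinarith
    linarith


private lemma le_of_sq_le {a b : ℝ} (ha : 0 ≤ a) (hb : 0 ≤ b) (h : a^2 ≤ b^2) : a ≤ b := by
  nlinarith

lemma proj_sphere (hr : 0 < r) (hx : r ≤ ‖x‖) (hy : r ≤ ‖y‖) :
    r * ‖(‖x‖⁻¹ • x) - (‖y‖⁻¹ • y)‖ ≤ ‖x - y‖ := by
  have hxn : (0:ℝ) < ‖x‖ := lt_of_lt_of_le hr hx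
  have hyn : (0:ℝ) < ‖y‖ := lt_of_lt_of_le hr hy
  have hsm : (0:ℝ) < ‖x‖ * ‖y‖ := by positivity
  refine le_of_sq_le (by positivity) (norm_nonneg _) ?_
  rw [mul_pow, norm_sub_sq_real, norm_sub_sq_real]
  rw [norm_smul, norm_smul, norm_inv, norm_norm, norm_inv, norm_norm,
    inv_mul_cancel₀ hxn.ne', inv_mul_cancel₀ hyn.ne']
  rw [real_inner_smul_left, real_inner_smul_right]
  have hip : ⟪x, y⟫ ≤ ‖x‖ * ‖y‖ := real_inner_le_norm x y
  have hrs : r^2 ≤ ‖x‖ * ‖y‖ := by nlinarith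
  have poly : 2*r^2*(‖x‖*‖y‖) - 2*r^2*⟪x,y⟫ ≤ (‖x‖^2 - 2*⟪x,y⟫ + ‖y‖^2) * (‖x‖*‖y‖) := by
    nlinarith [mul_nonneg (sub_nonneg.2 hip) (sub_nonneg.2 hrs),
      mul_nonneg hsm.le (sq_nonneg (‖x‖ - ‖y‖))]
  have heq : r^2*((1:ℝ)^2 - 2*(‖x‖⁻¹*(‖y‖⁻¹*⟪x,y⟫)) + 1^2)
      = (2*r^2*(‖x‖*‖y‖) - 2*r^2*⟪x,y⟫)/(‖x‖*‖y‖) := by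
    field_simp; ring
  rw [heq, div_le_iff₀ hsm]
  exact poly

lemma proj_mixed (hr : 0 < r) (hx : ‖x‖ ≤ r) (hy : r ≤ ‖y‖) :
    ‖x - r • (‖y‖⁻¹ • y)‖ ≤ ‖x - y‖ := by
  have hyn : (0:ℝ) < ‖y‖ := lt_of_lt_of_le hr hy
  refine le_of_sq_le (norm_nonneg _) (norm_nonneg _) ?_
  rw [norm_sub_sq_real, norm_sub_sq_real]
  rw [smul_smul, real_inner_smul_right, norm_smul, Real.norm_eq_abs,
    abs_of_nonneg (by positivity : (0:ℝ) ≤ r * ‖y‖⁻¹), mul_pow]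
  have h1 : (r * ‖y‖⁻¹)^2 * ‖y‖^2 = r^2 := by
    field_simp
  have hip : ⟪x, y⟫ ≤ ‖x‖ * ‖y‖ := real_inner_le_norm x y
  have h2 : ⟪x, y⟫ ≤ r * ‖y‖ := le_trans hip (by nlinarith)
  have poly : 2*⟪x,y⟫*(‖y‖-r) - (‖y‖^2-r^2)*‖y‖ ≤ 0 := by
    nlinarith [mul_nonneg (sub_nonneg.2 hy) (mul_nonneg hyn.le (sub_nonneg.2 hy)),
      mul_nonneg (sub_nonneg.2 hy) (sub_nonneg.2 h2)]
  have heq : ‖x‖^2 - 2*(r * ‖y‖⁻¹ * ⟪x,y⟫) + (r*‖y‖⁻¹)^2*‖y‖^2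
      - (‖x‖^2 - 2*⟪x,y⟫ + ‖y‖^2) = (2*⟪x,y⟫*(‖y‖-r) - (‖y‖^2-r^2)*‖y‖)/‖y‖ := by
    field_simp; ring
  have hdiv : (2*⟪x,y⟫*(‖y‖-r) - (‖y‖^2-r^2)*‖y‖)/‖y‖ ≤ 0 :=
    div_nonpos_of_nonpos_of_nonneg poly hyn.le
  linarith [heq ▸ hdiv]


private lemma arith_one {t : ℝ} (ht : 2 ≤ t) : 1 ≤ 1 + t*(t-1)*(t^2+1) := by
  nlinarith [mul_nonneg (mul_nonneg (show (0:ℝ) ≤ t by linarith)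
    (show (0:ℝ) ≤ t-1 by linarith)) (show (0:ℝ) ≤ t^2+1 by positivity)]

private lemma arith_t {t : ℝ} (ht : 2 ≤ t) : t ≤ 1 + t*(t-1)*(t^2+1) := by
  nlinarith [mul_nonneg (mul_nonneg (show (0:ℝ) ≤ t*t by positivity)
      (show (0:ℝ) ≤ t-1 by linarith)) (show (0:ℝ) ≤ t-1 by linarith),
    mul_nonneg (show (0:ℝ) ≤ t by linarith)
      (show (0:ℝ) ≤ t^2-4 by nlinarith)]

private lemma calc_one_add {r R : ℝ} (hr : r ≠ 0) : 1 + (R-r)/r = R/r := by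
  field_simp; ring

private lemma calc_rq {r a a' : ℝ} (h : a - r ≠ 0) :
    r - r*((a'-r)/(a-r)) = r*(a-a')/(a-r) := by
  field_simp; ring

private lemma calc_sum {R r du : ℝ} (h : r ≠ 0) :
    (R^2/(2*r)*du)*(R-r) + (R-r)*(R^2/(2*r)*du) = R^2*(R-r)/r*du := by
  field_simp; ring

private lemma coefbound {r R : ℝ} (hr : 0 < r) (h2R : 2*r ≤ R) :
    (R-r)/r + (R - 2*r)/r + (R-r)^2*R^2/r^4 ≤ 1 + R/r*(R/r-1)*((R/r)^2+1) := by
  have hR0 : (0:ℝ) < R := by linarith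
  have h4 : (0:ℝ) < r^4 := by positivity
  apply le_of_mul_le_mul_right _ h4
  have e1 : ((R-r)/r + (R - 2*r)/r + (R-r)^2*R^2/r^4) * r^4
      = (R-r)*r^3 + (R-2*r)*r^3 + (R-r)^2*R^2 := by field_simp
  have e2 : (1 + R/r*(R/r-1)*((R/r)^2+1)) * r^4 = r^4 + R*(R-r)*(R^2+r^2) := by
    field_simp
  rw [e1, e2]
  nlinarith [mul_nonneg (mul_nonneg hr.le hR0.le)
    (mul_nonneg (by linarith : (0:ℝ) ≤ R - 2*r) (by linarith : (0:ℝ) ≤ R + 2*r)),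
    mul_pos hr (mul_pos hr (mul_pos hr hr))]

lemma f_eq (hr : 0 < r)
    (hf : ∀ x, f x = if ‖x‖ ≤ r then x else
      (r + (‖x‖ - r) * ((radialFn C' (‖x‖⁻¹ • x) - r) / (radialFn C (‖x‖⁻¹ • x) - r))) •
        (‖x‖⁻¹ • x))
    {x : EuclideanSpace ℝ (Fin (n + 1))} (hx : r ≤ ‖x‖) :
    f x = (r + (‖x‖ - r) * ((radialFn C' (‖x‖⁻¹ • x) - r) / (radialFn C (‖x‖⁻¹ • x) - r))) •
      (‖x‖⁻¹ • x) := by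
  rw [hf x]
  by_cases h : ‖x‖ ≤ r
  · have hxr : ‖x‖ = r := le_antisymm h hx
    rw [if_pos h, hxr, sub_self, zero_mul, add_zero, smul_smul, mul_inv_cancel₀ hr.ne', one_smul]
  · rw [if_neg h]

set_option maxHeartbeats 1000000 in
lemma lip_key (hC : IsCompact C) (hCc : Convex ℝ C) (hC' : IsCompact C') (hC'c : Convex ℝ C')
    (hr : 0 < r) (h2R : 2*r ≤ R)
    (h2C : closedBall 0 (2*r) ⊆ C) (h2C' : closedBall 0 (2*r) ⊆ C')
    (hCR : C ⊆ closedBall 0 R) (hC'R : C' ⊆ closedBall 0 R)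
    (hf : ∀ x, f x = if ‖x‖ ≤ r then x else
      (r + (‖x‖ - r) * ((radialFn C' (‖x‖⁻¹ • x) - r) / (radialFn C (‖x‖⁻¹ • x) - r))) •
        (‖x‖⁻¹ • x))
    (x y : EuclideanSpace ℝ (Fin (n + 1))) (hxR : ‖x‖ ≤ R) (hyR : ‖y‖ ≤ R)
    (hxy : ‖x‖ ≤ ‖y‖) :
    ‖f x - f y‖ ≤ (1 + R/r*(R/r-1)*((R/r)^2+1)) * ‖x - y‖ := by
  have hR0 : (0:ℝ) < R := by linarith
  have ht2 : (2:ℝ) ≤ R/r := by rw [le_div_iff₀ hr]; linarith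
  have hL1 : (1:ℝ) ≤ 1 + R/r*(R/r-1)*((R/r)^2+1) := arith_one ht2
  set L := 1 + R/r*(R/r-1)*((R/r)^2+1) with hLdef
  set d := ‖x - y‖ with hd
  have hd0 : (0:ℝ) ≤ d := norm_nonneg _
  by_cases hyr : ‖y‖ ≤ r
  · rw [hf x, hf y, if_pos (le_trans hxy hyr), if_pos hyr]
    exact le_mul_of_one_le_left hd0 hL1
  · push_neg at hyr
    have hyr' : r ≤ ‖y‖ := hyr.le
    have hyn : (0:ℝ) < ‖y‖ := lt_of_lt_of_le hr hyr'
    set v := ‖y‖⁻¹ • y with hvdef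
    have hv : ‖v‖ = 1 := by
      rw [hvdef, norm_smul, norm_inv, norm_norm, inv_mul_cancel₀ hyn.ne']
    obtain ⟨hb1, hb2, _⟩ := radial_basic (C := C) hC hr h2C hCR hv
    obtain ⟨hb'1, hb'2, _⟩ := radial_basic (C := C') hC' hr h2C' hC'R hv
    set b := radialFn C v with hbdef
    set b' := radialFn C' v with hb'def
    set qv := (b' - r)/(b - r) with hqvdef
    have hbr : r ≤ b - r := by linarith
    have hb'r : r ≤ b' - r := by linarith
    have hqv0 : 0 ≤ qv := div_nonneg (by linarith) (by linarith)
    have hqvle : qv ≤ (R-r)/r := div_le_div₀ (by linarith) (by linarith) hr hbr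
    have hfy : f y = (r + (‖y‖ - r) * qv) • v := f_eq hr hf hyr'
    have hmr0 : 0 ≤ ‖y‖ - r := by linarith
    by_cases hxr : ‖x‖ ≤ r
    · -- mixed case
      rw [hf x, if_pos hxr, hfy]
      have hsplit : x - (r + (‖y‖ - r) * qv) • v = (x - r • v) + (-((‖y‖ - r) * qv)) • v := by
        module
      rw [hsplit]
      have h1 : ‖x - r • v‖ ≤ d := proj_mixed hr hxr hyr'
      have h2 : ‖(-((‖y‖ - r) * qv)) • v‖ = (‖y‖ - r) * qv := by
        rw [norm_smul, hv, mul_one, Real.norm_eq_abs, abs_neg,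
          abs_of_nonneg (mul_nonneg hmr0 hqv0)]
      have h3 : ‖y‖ - r ≤ d := by
        have := norm_sub_norm_le y x
        rw [norm_sub_rev y x, ← hd] at this
        linarith
      have h4 : (‖y‖ - r) * qv ≤ d * ((R-r)/r) := mul_le_mul h3 hqvle hqv0 hd0
      have hcoef : R/r ≤ L := hLdef ▸ arith_t ht2
      calc ‖(x - r • v) + (-((‖y‖ - r) * qv)) • v‖
          ≤ ‖x - r • v‖ + ‖(-((‖y‖ - r) * qv)) • v‖ := norm_add_le _ _
        _ ≤ d + d * ((R-r)/r) := by rw [h2]; exact add_le_add h1 h4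
        _ = (1 + (R-r)/r) * d := by ring
        _ = (R/r) * d := by rw [calc_one_add hr.ne']
        _ ≤ L * d := mul_le_mul_of_nonneg_right hcoef hd0
    · -- main case
      push_neg at hxr
      have hxr' : r ≤ ‖x‖ := hxr.le
      have hxn : (0:ℝ) < ‖x‖ := lt_of_lt_of_le hr hxr'
      set u := ‖x‖⁻¹ • x with hudef
      have hu : ‖u‖ = 1 := by
        rw [hudef, norm_smul, norm_inv, norm_norm, inv_mul_cancel₀ hxn.ne']
      obtain ⟨ha1, ha2, _⟩ := radial_basic (C := C) hC hr h2C hCR hu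
      obtain ⟨ha'1, ha'2, _⟩ := radial_basic (C := C') hC' hr h2C' hC'R hu
      set a := radialFn C u with hadef
      set a' := radialFn C' u with ha'def
      set qu := (a' - r)/(a - r) with hqudef
      have har : r ≤ a - r := by linarith
      have ha'r : r ≤ a' - r := by linarith
      have hqu0 : 0 ≤ qu := div_nonneg (by linarith) (by linarith)
      have hqule : qu ≤ (R-r)/r := div_le_div₀ (by linarith) (by linarith) hr har
      have hfx : f x = (r + (‖x‖ - r) * qu) • u := f_eq hr hf hxr'
      set du := ‖u - v‖ with hdu
      have hdu0 : (0:ℝ) ≤ du := norm_nonneg _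
      have hdur : du ≤ d / r := by
        rw [le_div_iff₀ hr]
        have := proj_sphere hr hxr' hyr'
        rw [← hudef, ← hvdef, ← hdu, ← hd] at this
        linarith [this]
      have hxu : x = ‖x‖ • u := by
        rw [hudef, smul_smul, mul_inv_cancel₀ hxn.ne', one_smul]
      have hyv : y = ‖y‖ • v := by
        rw [hvdef, smul_smul, mul_inv_cancel₀ hyn.ne', one_smul]
      have hiden2 : ∀ s m : ℝ, (r + (s - r) * qu) • u - (r + (m - r) * qv) • v
          = qu • (s • u - m • v) + (r - r * qu) • (u - v) + ((m - r) * (qu - qv)) • v :=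
        fun s m => by module
      have hiden : (r + (‖x‖ - r) * qu) • u - (r + (‖y‖ - r) * qv) • v
          = qu • (x - y) + (r - r * qu) • (u - v) + ((‖y‖ - r) * (qu - qv)) • v := by
        have h := hiden2 ‖x‖ ‖y‖
        rwa [← hxu, ← hyv] at h
      rw [hfx, hfy, hiden]
      have hT1 : ‖qu • (x - y)‖ ≤ (R-r)/r * d := by
        rw [norm_smul, Real.norm_eq_abs, abs_of_nonneg hqu0, ← hd]
        exact mul_le_mul_of_nonneg_right hqule hd0
      have hT2 : ‖(r - r * qu) • (u - v)‖ ≤ (R - 2*r)/r * d := by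
        rw [norm_smul, Real.norm_eq_abs, ← hdu]
        have e2 : |r - r * qu| ≤ R - 2*r := by
          rw [hqudef, calc_rq (by linarith : a - r ≠ 0), abs_div,
            abs_of_pos (by linarith : (0:ℝ) < a - r), abs_mul, abs_of_pos hr]
          rw [div_le_iff₀ (by linarith : (0:ℝ) < a - r)]
          have haa' : |a - a'| ≤ R - 2*r := by
            rw [abs_le]; constructor <;> linarith
          calc r * |a - a'| ≤ (a - r) * (R - 2*r) :=
                mul_le_mul har haa' (abs_nonneg _) (by linarith)
            _ = (R - 2*r) * (a - r) := mul_comm _ _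
        calc |r - r*qu| * du ≤ (R - 2*r) * (d/r) :=
              mul_le_mul e2 hdur hdu0 (by linarith)
          _ = (R - 2*r)/r * d := by ring
      have hT3 : ‖((‖y‖ - r) * (qu - qv)) • v‖ ≤ (R-r)^2*R^2/r^4 * d := by
        rw [norm_smul, hv, mul_one, Real.norm_eq_abs, abs_mul, abs_of_nonneg hmr0]
        have K0 : (0:ℝ) ≤ R^2/(2*r) := by positivity
        have hab : |a - b| ≤ R^2/(2*r) * du := by
          rw [abs_le]
          constructor
          · have := radial_lip (C := C) hC hCc hr h2C hCR hv hu
            rw [norm_sub_rev v u, ← hdu, ← hbdef, ← hadef] at this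
            linarith
          · have := radial_lip (C := C) hC hCc hr h2C hCR hu hv
            rw [← hdu, ← hbdef, ← hadef] at this
            linarith
        have hab' : |a' - b'| ≤ R^2/(2*r) * du := by
          rw [abs_le]
          constructor
          · have := radial_lip (C := C') hC' hC'c hr h2C' hC'R hv hu
            rw [norm_sub_rev v u, ← hdu, ← hb'def, ← ha'def] at this
            linarith
          · have := radial_lip (C := C') hC' hC'c hr h2C' hC'R hu hv
            rw [← hdu, ← hb'def, ← ha'def] at this
            linarith
        have hane : a - r ≠ 0 := ne_of_gt (lt_of_lt_of_le hr har)
        have hbne : b - r ≠ 0 := ne_of_gt (lt_of_lt_of_le hr hbr)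
        have hnum : qu - qv = ((a'-r)*(b-r) - (a-r)*(b'-r))/((a-r)*(b-r)) := by
          rw [hqudef, hqvdef]
          exact div_sub_div _ _ hane hbne
        have hNeq : (a'-r)*(b-r) - (a-r)*(b'-r) = (a'-b')*(b-r) + (b'-r)*(b-a) := by ring
        have hNb : |(a'-r)*(b-r) - (a-r)*(b'-r)| ≤ R^2*(R-r)/r * du := by
          rw [hNeq]
          calc |(a'-b')*(b-r) + (b'-r)*(b-a)|
              ≤ |(a'-b')*(b-r)| + |(b'-r)*(b-a)| := abs_add_le _ _
            _ = |a'-b'| * (b-r) + (b'-r) * |b-a| := by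
                rw [abs_mul, abs_mul, abs_of_nonneg (by linarith : (0:ℝ) ≤ b - r),
                  abs_of_nonneg (by linarith : (0:ℝ) ≤ b' - r)]
            _ ≤ (R^2/(2*r) * du) * (R-r) + (R-r) * (R^2/(2*r) * du) := by
                have hba : |b - a| ≤ R^2/(2*r) * du := by rw [abs_sub_comm]; exact hab
                apply add_le_add
                · exact mul_le_mul hab' (by linarith) (by linarith)
                    (mul_nonneg K0 hdu0)
                · exact mul_le_mul (by linarith) hba (abs_nonneg _) (by linarith)
            _ = R^2*(R-r)/r * du := calc_sum hr.ne'
        have hD : r^2 ≤ (a-r)*(b-r) := by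
          calc r^2 = r*r := sq r
            _ ≤ (a-r)*(b-r) := mul_le_mul har hbr hr.le (le_trans hr.le har)
        have hqq : |qu - qv| ≤ (R-r)*R^2/r^3 * du := by
          rw [hnum, abs_div, abs_of_pos (mul_pos (hr.trans_le har) (hr.trans_le hbr))]
          calc |(a'-r)*(b-r) - (a-r)*(b'-r)| / ((a-r)*(b-r))
              ≤ (R^2*(R-r)/r * du) / r^2 :=
                div_le_div₀ (mul_nonneg (div_nonneg (mul_nonneg (sq_nonneg R)
                  (by linarith)) hr.le) hdu0) hNb (by positivity) hD
            _ = (R-r)*R^2/r^3 * du := by ring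
        calc (‖y‖ - r) * |qu - qv| ≤ (R-r) * ((R-r)*R^2/r^3 * (d/r)) := by
              apply mul_le_mul (by linarith)
                (le_trans hqq (mul_le_mul_of_nonneg_left hdur
                  (div_nonneg (mul_nonneg (by linarith) (sq_nonneg R)) (by positivity))))
                (abs_nonneg _) (by linarith)
          _ = (R-r)^2*R^2/r^4 * d := by ring
      have hcoef : (R-r)/r + (R - 2*r)/r + (R-r)^2*R^2/r^4 ≤ L :=
        hLdef ▸ coefbound hr h2R
      calc ‖qu • (x - y) + (r - r * qu) • (u - v) + ((‖y‖ - r) * (qu - qv)) • v‖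
          ≤ ‖qu • (x - y)‖ + ‖(r - r * qu) • (u - v)‖ + ‖((‖y‖ - r) * (qu - qv)) • v‖ :=
            norm_add₃_le
        _ ≤ ((R-r)/r + (R - 2*r)/r + (R-r)^2*R^2/r^4) * d := by linarith
        _ ≤ L * d := mul_le_mul_of_nonneg_right hcoef hd0

private lemma calc_inv {r s A A' : ℝ} (hA : A - r ≠ 0) (hA' : A' - r ≠ 0) :
    r + ((r + (s - r)*((A'-r)/(A-r))) - r) * ((A-r)/(A'-r)) = s := by
  field_simp; ring

lemma maps_to_aux (hC : IsCompact C) (hCc : Convex ℝ C) (hC' : IsCompact C') (hC'c : Convex ℝ C')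
    (hr : 0 < r) (h2R : 2*r ≤ R)
    (h2C : closedBall 0 (2*r) ⊆ C) (h2C' : closedBall 0 (2*r) ⊆ C')
    (hCR : C ⊆ closedBall 0 R) (hC'R : C' ⊆ closedBall 0 R)
    (hf : ∀ x, f x = if ‖x‖ ≤ r then x else
      (r + (‖x‖ - r) * ((radialFn C' (‖x‖⁻¹ • x) - r) / (radialFn C (‖x‖⁻¹ • x) - r))) •
        (‖x‖⁻¹ • x)) :
    Set.MapsTo f C C' := by
  intro x hx
  rw [hf x]
  by_cases h : ‖x‖ ≤ r
  · rw [if_pos h]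
    exact h2C' (mem_closedBall_zero_iff.2 (by linarith))
  · rw [if_neg h]
    push_neg at h
    have hxn : (0:ℝ) < ‖x‖ := lt_trans hr h
    have hx0 : x ≠ 0 := norm_pos_iff.1 hxn
    set u := ‖x‖⁻¹ • x with hudef
    have hu : ‖u‖ = 1 := by
      rw [hudef, norm_smul, norm_inv, norm_norm, inv_mul_cancel₀ hxn.ne']
    obtain ⟨ha1, ha2, _⟩ := radial_basic (C := C) hC hr h2C hCR hu
    obtain ⟨ha'1, ha'2, _⟩ := radial_basic (C := C') hC' hr h2C' hC'R hu
    set a := radialFn C u with hadef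
    set a' := radialFn C' u with ha'def
    set qu := (a' - r)/(a - r) with hqudef
    have har : r ≤ a - r := by linarith
    have hqu0 : 0 ≤ qu := div_nonneg (by linarith) (by linarith)
    have hxa : ‖x‖ ≤ a := radial_ub hC hr h2C hCR hx hx0
    have hmul : (a - r) * qu = a' - r := by
      rw [hqudef, mul_div_cancel₀ _ (ne_of_gt (lt_of_lt_of_le hr har))]
    have hs1 : 0 ≤ r + (‖x‖ - r) * qu := by
      have := mul_nonneg (by linarith : (0:ℝ) ≤ ‖x‖ - r) hqu0
      linarith
    have hs2 : r + (‖x‖ - r) * qu ≤ a' := by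
      have := mul_le_mul_of_nonneg_right (by linarith : ‖x‖ - r ≤ a - r) hqu0
      rw [hmul] at this
      linarith
    exact radial_star hC' hC'c hr h2C' hC'R hu hs1 hs2

lemma inv_aux (hC : IsCompact C) (hCc : Convex ℝ C) (hC' : IsCompact C') (hC'c : Convex ℝ C')
    (hr : 0 < r) (h2R : 2*r ≤ R)
    (h2C : closedBall 0 (2*r) ⊆ C) (h2C' : closedBall 0 (2*r) ⊆ C')
    (hCR : C ⊆ closedBall 0 R) (hC'R : C' ⊆ closedBall 0 R)
    {g : EuclideanSpace ℝ (Fin (n + 1)) → EuclideanSpace ℝ (Fin (n + 1))}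
    (hf : ∀ x, f x = if ‖x‖ ≤ r then x else
      (r + (‖x‖ - r) * ((radialFn C' (‖x‖⁻¹ • x) - r) / (radialFn C (‖x‖⁻¹ • x) - r))) •
        (‖x‖⁻¹ • x))
    (hg : ∀ x, g x = if ‖x‖ ≤ r then x else
      (r + (‖x‖ - r) * ((radialFn C (‖x‖⁻¹ • x) - r) / (radialFn C' (‖x‖⁻¹ • x) - r))) •
        (‖x‖⁻¹ • x)) :
    ∀ x, g (f x) = x := by
  intro x
  by_cases h : ‖x‖ ≤ r
  · rw [hf x, if_pos h, hg x, if_pos h]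
  · push_neg at h
    have hxn : (0:ℝ) < ‖x‖ := lt_trans hr h
    have hx0 : x ≠ 0 := norm_pos_iff.1 hxn
    set u := ‖x‖⁻¹ • x with hudef
    have hu : ‖u‖ = 1 := by
      rw [hudef, norm_smul, norm_inv, norm_norm, inv_mul_cancel₀ hxn.ne']
    obtain ⟨ha1, ha2, _⟩ := radial_basic (C := C) hC hr h2C hCR hu
    obtain ⟨ha'1, ha'2, _⟩ := radial_basic (C := C') hC' hr h2C' hC'R hu
    have hane : radialFn C u - r ≠ 0 := by linarith
    have ha'ne : radialFn C' u - r ≠ 0 := by linarith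
    have hqupos : 0 < (radialFn C' u - r)/(radialFn C u - r) :=
      div_pos (by linarith) (by linarith)
    set s := r + (‖x‖ - r) * ((radialFn C' u - r)/(radialFn C u - r)) with hsdef
    have hsr : r < s := by
      have := mul_pos (by linarith : (0:ℝ) < ‖x‖ - r) hqupos
      rw [hsdef]; linarith
    have hs0 : (0:ℝ) < s := lt_trans hr hsr
    have hfx : f x = s • u := by rw [hf x, if_neg (not_le.2 h)]
    have hnorm : ‖s • u‖ = s := by
      rw [norm_smul, hu, mul_one, Real.norm_eq_abs, abs_of_pos hs0]
    have husu : ‖s • u‖⁻¹ • (s • u) = u := by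
      rw [hnorm, smul_smul, inv_mul_cancel₀ hs0.ne', one_smul]
    rw [hfx, hg (s • u), if_neg (by rw [hnorm]; exact not_le.2 hsr), husu, hnorm]
    have hcoe : r + (s - r) * ((radialFn C u - r)/(radialFn C' u - r)) = ‖x‖ := by
      rw [hsdef]
      exact calc_inv hane ha'ne
    rw [hcoe, hudef, smul_smul, mul_inv_cancel₀ hxn.ne', one_smul]


lemma lip_bounds (hC : IsCompact C) (hCc : Convex ℝ C) (hC' : IsCompact C') (hC'c : Convex ℝ C')
    (hr : 0 < r) (h2R : 2*r ≤ R)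
    (h2C : closedBall 0 (2*r) ⊆ C) (h2C' : closedBall 0 (2*r) ⊆ C')
    (hCR : C ⊆ closedBall 0 R) (hC'R : C' ⊆ closedBall 0 R)
    (hf : ∀ x, f x = if ‖x‖ ≤ r then x else
      (r + (‖x‖ - r) * ((radialFn C' (‖x‖⁻¹ • x) - r) / (radialFn C (‖x‖⁻¹ • x) - r))) •
        (‖x‖⁻¹ • x)) :
    1 ≤ lipConstOn f C ∧ lipConstOn f C ≤ 1 + R/r*(R/r-1)*((R/r)^2+1) := by
  have ht2 : (2:ℝ) ≤ R/r := by rw [le_div_iff₀ hr]; linarith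
  have hL1 : (1:ℝ) ≤ 1 + R/r*(R/r-1)*((R/r)^2+1) := arith_one ht2
  set L := 1 + R/r*(R/r-1)*((R/r)^2+1) with hLdef
  have hLmem : L ∈ { K : ℝ | 0 ≤ K ∧ ∀ x ∈ C, ∀ y ∈ C, dist (f x) (f y) ≤ K * dist x y } := by
    refine ⟨by linarith, fun x hx y hy => ?_⟩
    have hxR : ‖x‖ ≤ R := mem_closedBall_zero_iff.1 (hCR hx)
    have hyR : ‖y‖ ≤ R := mem_closedBall_zero_iff.1 (hCR hy)
    rcases le_total ‖x‖ ‖y‖ with hc | hc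
    · rw [dist_eq_norm, dist_eq_norm]
      exact lip_key hC hCc hC' hC'c hr h2R h2C h2C' hCR hC'R hf x y hxR hyR hc
    · rw [dist_eq_norm, dist_eq_norm, norm_sub_rev (f x), norm_sub_rev x]
      exact lip_key hC hCc hC' hC'c hr h2R h2C h2C' hCR hC'R hf y x hyR hxR hc
  have hbdd : BddBelow { K : ℝ | 0 ≤ K ∧ ∀ x ∈ C, ∀ y ∈ C, dist (f x) (f y) ≤ K * dist x y } :=
    ⟨0, fun K hK => hK.1⟩
  constructor
  · apply le_csInf ⟨L, hLmem⟩
    rintro K ⟨hK0, hK⟩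
    have h0 : (0 : EuclideanSpace ℝ (Fin (n+1))) ∈ C :=
      h2C (mem_closedBall_zero_iff.2 (by rw [norm_zero]; positivity))
    set y := r • (EuclideanSpace.single (0 : Fin (n+1)) (1:ℝ)) with hydef
    have hy : ‖y‖ = r := by
      rw [hydef, norm_smul, EuclideanSpace.norm_single, norm_one, mul_one,
        Real.norm_eq_abs, abs_of_pos hr]
    have hyC : y ∈ C := h2C (mem_closedBall_zero_iff.2 (by rw [hy]; linarith))
    have hKy := hK y hyC 0 h0
    have hfyy : f y = y := by rw [hf y, if_pos (le_of_eq hy)]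
    have hf00 : f 0 = 0 := by rw [hf 0, if_pos (by rw [norm_zero]; exact hr.le)]
    rw [hfyy, hf00, dist_zero_right, hy] at hKy
    exact le_of_mul_le_mul_right (by linarith [hKy]) hr
  · exact csInf_le hbdd hLmem

end AuxRadial


/-- For convex bodies `C, C'` with `B̄(0,2r) ⊆ C ∩ C'` and `C ∪ C' ⊆ B̄(0,R)`,
the explicit radial map `f : C → C'` (and its inverse `g`) is bilipschitz with
`1 ≤ Lip(f), Lip(f⁻¹) ≤ 1 + (R/r)(R/r − 1)((R/r)² + 1)`. -/
theorem bilipschitz_radial_map_bound {n : ℕ}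
    (C C' : Set (EuclideanSpace ℝ (Fin (n + 1)))) (r R : ℝ)
    (hC : IsConvexBody C) (hC' : IsConvexBody C') (hr : 0 < r) (hrR : r < R)
    (hin : closedBall 0 (2 * r) ⊆ C ∩ C') (hout : C ∪ C' ⊆ closedBall 0 R)
    (f g : EuclideanSpace ℝ (Fin (n + 1)) → EuclideanSpace ℝ (Fin (n + 1)))
    (hf : ∀ x, f x = if ‖x‖ ≤ r then x else
      (r + (‖x‖ - r) * ((radialFn C' (‖x‖⁻¹ • x) - r) / (radialFn C (‖x‖⁻¹ • x) - r))) •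
        (‖x‖⁻¹ • x))
    (hg : ∀ x, g x = if ‖x‖ ≤ r then x else
      (r + (‖x‖ - r) * ((radialFn C (‖x‖⁻¹ • x) - r) / (radialFn C' (‖x‖⁻¹ • x) - r))) •
        (‖x‖⁻¹ • x)) :
    MapsTo f C C' ∧ MapsTo g C' C ∧ (∀ x ∈ C, g (f x) = x) ∧ (∀ y ∈ C', f (g y) = y) ∧
    1 ≤ lipConstOn f C ∧ lipConstOn f C ≤ 1 + R / r * (R / r - 1) * ((R / r) ^ 2 + 1) ∧
    1 ≤ lipConstOn g C' ∧ lipConstOn g C' ≤ 1 + R / r * (R / r - 1) * ((R / r) ^ 2 + 1) := by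
  obtain ⟨hCcomp, hCconv, -⟩ := hC
  obtain ⟨hC'comp, hC'conv, -⟩ := hC'
  have h2C : closedBall 0 (2*r) ⊆ C := fun z hz => (hin hz).1
  have h2C' : closedBall 0 (2*r) ⊆ C' := fun z hz => (hin hz).2
  have hCR : C ⊆ closedBall 0 R := fun z hz => hout (Or.inl hz)
  have hC'R : C' ⊆ closedBall 0 R := fun z hz => hout (Or.inr hz)
  have h2R : 2*r ≤ R := by
    have he : ‖((2*r) • EuclideanSpace.single (0 : Fin (n+1)) (1:ℝ))‖ = 2*r := by
      rw [norm_smul, EuclideanSpace.norm_single, norm_one, mul_one, Real.norm_eq_abs,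
        abs_of_pos (by positivity)]
    have hm : ((2*r) • EuclideanSpace.single (0 : Fin (n+1)) (1:ℝ))
        ∈ closedBall (0 : EuclideanSpace ℝ (Fin (n+1))) (2*r) :=
      mem_closedBall_zero_iff.2 (le_of_eq he)
    have hle := mem_closedBall_zero_iff.1 (hCR (h2C hm))
    rw [he] at hle
    exact hle
  obtain ⟨hlf1, hlf2⟩ := lip_bounds hCcomp hCconv hC'comp hC'conv hr h2R h2C h2C' hCR hC'R hf
  obtain ⟨hlg1, hlg2⟩ := lip_bounds hC'comp hC'conv hCcomp hCconv hr h2R h2C' h2C hC'R hCR hg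
  exact ⟨maps_to_aux hCcomp hCconv hC'comp hC'conv hr h2R h2C h2C' hCR hC'R hf,
    maps_to_aux hC'comp hC'conv hCcomp hCconv hr h2R h2C' h2C hC'R hCR hg,
    fun x _ => inv_aux hCcomp hCconv hC'comp hC'conv hr h2R h2C h2C' hCR hC'R hf hg x,
    fun y _ => inv_aux hC'comp hC'conv hCcomp hCconv hr h2R h2C' h2C hC'R hCR hg hf y,
    hlf1, hlf2, hlg1, hlg2⟩
end
end

section
/- Let C ⊂ ℝ^{n+1} be a convex body, {p_i} ⊂ ∂C a sequence of boundary points with p_i → p. Then the solid angle function is lower semicontinuous: α(p) ≤ liminf_{i→∞} α(p_i). In particular, there exists a point of ∂C whose tangent cone attains the minimum of the solid angle function over ∂C. -/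
open Set MeasureTheory Metric Filter
open scoped ENNReal NNReal Topology RealInnerProductSpace

noncomputable section

variable {n : ℕ}

/-! ### Auxiliary lemmas for Statement 17 -/

namespace SolidAngle17

variable {n : ℕ}

local notation "𝔼" => EuclideanSpace ℝ (Fin (n + 1))

lemma dilate_ball_subset (p y : 𝔼) {l δ : ℝ} (hl : 0 < l) :
    ball (p + l • (y - p)) (l * δ) ⊆ (fun x => p + l • (x - p)) '' ball y δ := by
  intro z hz
  have hl' : l ≠ 0 := hl.ne'
  refine ⟨p + l⁻¹ • (z - p), ?_, ?_⟩
  · rw [mem_ball, dist_eq_norm] at hz ⊢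
    have hx : (p + l⁻¹ • (z - p)) - y = l⁻¹ • (z - (p + l • (y - p))) := by
      match_scalars <;> field_simp <;> ring
    rw [hx, norm_smul, norm_inv, Real.norm_of_nonneg hl.le]
    calc l⁻¹ * ‖z - (p + l • (y - p))‖ < l⁻¹ * (l * δ) :=
          mul_lt_mul_of_pos_left hz (inv_pos.mpr hl)
      _ = δ := by field_simp
  · show p + l • ((p + l⁻¹ • (z - p)) - p) = z
    match_scalars <;> field_simp <;> ring

lemma ball_subset_tangentConeOf {C : Set 𝔼} {y : 𝔼} {δ : ℝ} (hb : ball y δ ⊆ C)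
    {l : ℝ} (hl : 0 < l) (p : 𝔼) :
    ball (p + l • (y - p)) (l * δ) ⊆ tangentConeOf C p := by
  refine (dilate_ball_subset p y hl).trans (subset_trans (image_mono hb)
    (subset_trans ?_ subset_closure))
  exact subset_biUnion_of_mem (u := fun l : ℝ => (fun x => p + l • (x - p)) '' C)
    (mem_Ioi.mpr hl)

/-- The union of the dilations of the interior. -/
def auxD (C : Set 𝔼) (q : 𝔼) : Set 𝔼 :=
  ⋃ l ∈ Ioi (0 : ℝ), (fun x => q + l • (x - q)) '' interior C

lemma auxD_isOpen (C : Set 𝔼) (q : 𝔼) : IsOpen (auxD C q) := by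
  rw [Metric.isOpen_iff]
  intro u hu
  obtain ⟨l, hl, x, hx, rfl⟩ := by
    simpa only [auxD, mem_iUnion, mem_Ioi, mem_image, exists_prop] using hu
  obtain ⟨δ, hδ, hball⟩ := Metric.isOpen_iff.mp isOpen_interior x hx
  refine ⟨l * δ, mul_pos hl hδ, fun z hz => ?_⟩
  obtain ⟨x', hx', rfl⟩ := dilate_ball_subset q x hl hz
  exact mem_iUnion₂.mpr ⟨l, mem_Ioi.mpr hl, mem_image_of_mem _ (hball hx')⟩

lemma dil_mono {C : Set 𝔼} (hC : Convex ℝ C) {q : 𝔼} (hq : q ∈ C) {l m : ℝ}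
    (hl : 0 < l) (hlm : l ≤ m) :
    (fun x => q + l • (x - q)) '' interior C ⊆ (fun x => q + m • (x - q)) '' interior C := by
  have hm : 0 < m := hl.trans_le hlm
  have hm' : m ≠ 0 := hm.ne'
  rintro _ ⟨x, hx, rfl⟩
  refine ⟨q + (l / m) • (x - q), ?_, ?_⟩
  · have h1 : q + (l / m) • (x - q) = (1 - l / m) • q + (l / m) • x := by module
    rw [h1]
    refine hC.combo_closure_interior_mem_interior (subset_closure hq) hx ?_
      (div_pos hl hm) (by ring)
    have : l / m ≤ 1 := (div_le_one hm).mpr hlm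
    linarith
  · show q + m • ((q + (l / m) • (x - q)) - q) = q + l • (x - q)
    match_scalars <;> field_simp <;> ring

lemma auxD_convex {C : Set 𝔼} (hC : Convex ℝ C) {q : 𝔼} (hq : q ∈ C) :
    Convex ℝ (auxD C q) := by
  intro a ha b hb s t hs ht hst
  obtain ⟨l, hl, x, hx, rfl⟩ := by
    simpa only [auxD, mem_iUnion, mem_Ioi, mem_image, exists_prop] using ha
  obtain ⟨m, hm, y, hy, rfl⟩ := by
    simpa only [auxD, mem_iUnion, mem_Ioi, mem_image, exists_prop] using hb
  have hMl : 0 < max l m := lt_max_of_lt_left hl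
  obtain ⟨x', hx', hxe⟩ := dil_mono hC hq hl (le_max_left l m) ⟨x, hx, rfl⟩
  obtain ⟨y', hy', hye⟩ := dil_mono hC hq hm (le_max_right l m) ⟨y, hy, rfl⟩
  simp only at hxe hye
  refine mem_iUnion₂.mpr ⟨max l m, mem_Ioi.mpr hMl,
    s • x' + t • y', hC.interior hx' hy' hs ht hst, ?_⟩
  show q + (max l m) • ((s • x' + t • y') - q) =
    s • (q + l • (x - q)) + t • (q + m • (y - q))
  rw [← hxe, ← hye]
  have h2 : s • (q + max l m • (x' - q)) + t • (q + max l m • (y' - q)) =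
      (s + t) • q + (max l m) • ((s • x' + t • y') - (s + t) • q) := by module
  rw [h2, hst, one_smul]

lemma mem_closure_interior {C : Set 𝔼} (hC : Convex ℝ C) (hint : (interior C).Nonempty)
    {x : 𝔼} (hx : x ∈ C) : x ∈ closure (interior C) := by
  obtain ⟨z, hz⟩ := hint
  rw [Metric.mem_closure_iff]
  intro ε hε
  set t : ℝ := min 1 (ε / (2 * (‖z - x‖ + 1))) with hts
  have ht0 : 0 < t := lt_min one_pos (by positivity)
  have ht1 : t ≤ 1 := min_le_left _ _
  refine ⟨t • z + (1 - t) • x, hC.combo_interior_closure_mem_interior hz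
    (subset_closure hx) ht0 (by linarith) (by ring), ?_⟩
  have hxy : x - (t • z + (1 - t) • x) = -(t • (z - x)) := by module
  rw [dist_eq_norm, hxy, norm_neg, norm_smul, Real.norm_of_nonneg ht0.le]
  have h1 : t ≤ ε / (2 * (‖z - x‖ + 1)) := min_le_right _ _
  have h2 : 0 < 2 * (‖z - x‖ + 1) := by positivity
  have h3 : t * ‖z - x‖ ≤ ε / (2 * (‖z - x‖ + 1)) * ‖z - x‖ :=
    mul_le_mul_of_nonneg_right h1 (norm_nonneg _)
  have h4 : ε / (2 * (‖z - x‖ + 1)) * ‖z - x‖ < ε := by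
    rw [div_mul_eq_mul_div, div_lt_iff₀ h2]
    nlinarith [norm_nonneg (z - x)]
  linarith

lemma closure_auxD {C : Set 𝔼} (hC : Convex ℝ C) (hint : (interior C).Nonempty) (q : 𝔼) :
    closure (auxD C q) = tangentConeOf C q := by
  apply subset_antisymm
  · exact closure_mono (iUnion₂_mono fun l _ => image_mono interior_subset)
  · apply closure_minimal ?_ isClosed_closure
    refine iUnion₂_subset fun l hl => ?_
    rintro _ ⟨x, hx, rfl⟩
    have hxcl : x ∈ closure (interior C) := mem_closure_interior hC hint hx
    have hcont : Continuous (fun x : 𝔼 => q + l • (x - q)) := by fun_prop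
    have h1 : q + l • (x - q) ∈ closure ((fun x => q + l • (x - q)) '' interior C) :=
      image_closure_subset_closure_image hcont ⟨x, hxcl, rfl⟩
    exact closure_mono (subset_biUnion_of_mem
      (u := fun l : ℝ => (fun x => q + l • (x - q)) '' interior C) hl) h1

lemma interior_tangentConeOf_subset {C : Set 𝔼} (hC : Convex ℝ C) {q : 𝔼} (hq : q ∈ C)
    (hint : (interior C).Nonempty) :
    interior (tangentConeOf C q) ⊆ auxD C q := by
  intro x hx
  rw [← closure_auxD hC hint q] at hx
  obtain ⟨z, hz⟩ := hint
  have hzD : z ∈ auxD C q := mem_iUnion₂.mpr ⟨1, mem_Ioi.mpr one_pos, z, hz, by simp⟩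
  obtain ⟨ε, hε, hball⟩ := Metric.isOpen_iff.mp isOpen_interior x hx
  set s : ℝ := ε / (2 * (‖x - z‖ + 1)) with hs
  have hspos : 0 < s := by positivity
  have h1s : (0:ℝ) < 1 + s := by linarith
  have hmem : x + s • (x - z) ∈ closure (auxD C q) := by
    apply interior_subset
    apply hball
    rw [mem_ball, dist_eq_norm]
    have he : x + s • (x - z) - x = s • (x - z) := by module
    rw [he, norm_smul, Real.norm_of_nonneg hspos.le]
    have h2 : 0 < 2 * (‖x - z‖ + 1) := by positivity
    have h4 : ε / (2 * (‖x - z‖ + 1)) * ‖x - z‖ < ε := by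
      rw [div_mul_eq_mul_div, div_lt_iff₀ h2]
      nlinarith [norm_nonneg (x - z)]
    exact h4
  have hab : 1 / (1 + s) + s / (1 + s) = 1 := by field_simp
  have hcombo := (auxD_convex hC hq).combo_closure_interior_mem_interior hmem
    (by rwa [(auxD_isOpen C q).interior_eq])
    (by positivity : (0:ℝ) ≤ 1 / (1 + s)) (by positivity : (0:ℝ) < s / (1 + s)) hab
  have hxeq : (1 / (1 + s)) • (x + s • (x - z)) + (s / (1 + s)) • z = x := by
    match_scalars <;> field_simp <;> ring
  rw [hxeq, (auxD_isOpen C q).interior_eq] at hcombo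
  exact hcombo

lemma key_perturb {C : Set 𝔼} (hC : Convex ℝ C) {q : 𝔼} (hq : q ∈ C)
    (hint : (interior C).Nonempty) {x : 𝔼} (hx : x ∈ interior (tangentConeOf C q)) :
    ∃ ε > 0, ∀ p : 𝔼, dist p q < ε →
      ball (x + (p - q)) ε ⊆ interior (tangentConeOf C p) := by
  have hx' := interior_tangentConeOf_subset hC hq hint hx
  obtain ⟨l, hl, y, hy, hxe⟩ := by
    simpa only [auxD, mem_iUnion, mem_Ioi, mem_image, exists_prop] using hx'
  obtain ⟨δ, hδ, hball⟩ := Metric.isOpen_iff.mp isOpen_interior y hy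
  have hballC : ball y δ ⊆ C := hball.trans interior_subset
  refine ⟨min (δ / 2) (l * δ / 2), by positivity, fun p hp => ?_⟩
  have hsub : ball (x + (p - q)) (min (δ / 2) (l * δ / 2)) ⊆
      ball (p + l • (y - p)) (l * δ) := by
    apply ball_subset_ball'
    have hd : dist (x + (p - q)) (p + l • (y - p)) = l * dist p q := by
      rw [dist_eq_norm, dist_eq_norm]
      have hz : x + (p - q) - (p + l • (y - p)) = l • (p - q) := by
        rw [← hxe]; module
      rw [hz, norm_smul, Real.norm_of_nonneg hl.le]
    rw [hd]
    have h1 := min_le_left (δ / 2) (l * δ / 2)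
    have h2 := min_le_right (δ / 2) (l * δ / 2)
    nlinarith [dist_nonneg (x := p) (y := q)]
  exact (interior_maximal (hsub.trans (ball_subset_tangentConeOf hballC hl p))
    isOpen_ball)

lemma key_compact {C : Set 𝔼} (hC : Convex ℝ C) {q : 𝔼} (hq : q ∈ C)
    (hint : (interior C).Nonempty) {K : Set 𝔼} (hK : IsCompact K)
    (hKsub : K ⊆ interior (tangentConeOf C q)) :
    ∃ ε > 0, ∀ p : 𝔼, dist p q < ε → ∀ x ∈ K,
      x + (p - q) ∈ interior (tangentConeOf C p) := by
  rcases K.eq_empty_or_nonempty with rfl | hne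
  · exact ⟨1, one_pos, fun p _ x hx => absurd hx (notMem_empty x)⟩
  choose! ε hεpos hεball using fun (x : 𝔼) (hx : x ∈ interior (tangentConeOf C q)) =>
    key_perturb hC hq hint hx
  have hcov : K ⊆ ⋃ x : K, ball (x : 𝔼) (ε x / 2) := fun x hx =>
    mem_iUnion.mpr ⟨⟨x, hx⟩, mem_ball_self (half_pos (hεpos x (hKsub hx)))⟩
  obtain ⟨t, ht⟩ := hK.elim_finite_subcover (fun x : K => ball (x : 𝔼) (ε x / 2))
    (fun _ => isOpen_ball) hcov
  have htne : t.Nonempty := by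
    obtain ⟨x, hx⟩ := hne
    obtain ⟨j, hjt, _⟩ := mem_iUnion₂.mp (ht hx)
    exact ⟨j, hjt⟩
  refine ⟨t.inf' htne (fun j => ε j / 2), ?_, ?_⟩
  · exact (Finset.lt_inf'_iff htne).mpr fun j _ => half_pos (hεpos j (hKsub j.2))
  intro p hp x hx
  obtain ⟨j, hjt, hjx⟩ := mem_iUnion₂.mp (ht hx)
  have hjpos : 0 < ε j := hεpos j (hKsub j.2)
  have hεj : t.inf' htne (fun j => ε j / 2) ≤ ε j / 2 := Finset.inf'_le _ hjt
  have h1 : dist p q < ε j := by linarith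
  have h2 : x + (p - q) ∈ ball ((j : 𝔼) + (p - q)) (ε j) := by
    rw [mem_ball, dist_add_right]
    have := mem_ball.mp hjx
    linarith
  exact hεball j (hKsub j.2) p h1 h2

/-! ### Finiteness of the Hausdorff measure of the sphere -/

lemma sqrt_sub_le_of_le {a b : ℝ} (ha : (4:ℝ)⁻¹ ≤ a) (hb : (4:ℝ)⁻¹ ≤ b) (h : b ≤ a) :
    Real.sqrt a - Real.sqrt b ≤ a - b := by
  have h0a : (0:ℝ) ≤ a := le_trans (by norm_num) ha
  have h0b : (0:ℝ) ≤ b := le_trans (by norm_num) hb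
  have hsa : Real.sqrt a ^ 2 = a := Real.sq_sqrt h0a
  have hsb : Real.sqrt b ^ 2 = b := Real.sq_sqrt h0b
  have h2a : (2:ℝ)⁻¹ ≤ Real.sqrt a := by
    have := Real.sqrt_le_sqrt ha
    rwa [show ((4:ℝ)⁻¹) = (2:ℝ)⁻¹ ^ 2 by norm_num, Real.sqrt_sq (by norm_num)] at this
  have h2b : (2:ℝ)⁻¹ ≤ Real.sqrt b := by
    have := Real.sqrt_le_sqrt hb
    rwa [show ((4:ℝ)⁻¹) = (2:ℝ)⁻¹ ^ 2 by norm_num, Real.sqrt_sq (by norm_num)] at this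
  have hsab : Real.sqrt b ≤ Real.sqrt a := Real.sqrt_le_sqrt h
  nlinarith [mul_nonneg (sub_nonneg.mpr hsab)
    (by linarith : (0:ℝ) ≤ Real.sqrt a + Real.sqrt b - 1)]

lemma abs_sqrt_sub_sqrt_le {a b : ℝ} (ha : (4:ℝ)⁻¹ ≤ a) (hb : (4:ℝ)⁻¹ ≤ b) :
    |Real.sqrt a - Real.sqrt b| ≤ |a - b| := by
  rcases le_total b a with h | h
  · rw [abs_of_nonneg (sub_nonneg.mpr (Real.sqrt_le_sqrt h)), abs_of_nonneg (sub_nonneg.mpr h)]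
    exact sqrt_sub_le_of_le ha hb h
  · rw [abs_sub_comm, abs_sub_comm a b,
      abs_of_nonneg (sub_nonneg.mpr (Real.sqrt_le_sqrt h)), abs_of_nonneg (sub_nonneg.mpr h)]
    exact sqrt_sub_le_of_le hb ha h

lemma closedBall_hausdorff_lt_top (m : ℕ) :
    μH[(m : ℝ)] (closedBall (0 : EuclideanSpace ℝ (Fin m)) 1) < ⊤ := by
  have h1 : (m : ℝ) = ((Module.finrank ℝ (EuclideanSpace ℝ (Fin m)) : ℕ) : ℝ) := by
    rw [finrank_euclideanSpace_fin]
  rw [h1]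
  exact (isCompact_closedBall _ _).measure_lt_top

set_option maxHeartbeats 1000000 in
lemma hausdorff_cap_lt_top (e : 𝔼) (he : ‖e‖ = 1) :
    μH[(n : ℝ)] {x : 𝔼 | x ∈ sphere (0:𝔼) 1 ∧ (2:ℝ)⁻¹ < ⟪e, x⟫} < ⊤ := by
  classical
  have hne : e ≠ 0 := by
    intro h; rw [h, norm_zero] at he; norm_num at he
  have hfin : Module.finrank ℝ ((Submodule.span ℝ {e})ᗮ : Submodule ℝ 𝔼) = n := by
    have h1 := Submodule.finrank_add_finrank_orthogonal (K := Submodule.span ℝ {e})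
    rw [finrank_span_singleton hne, finrank_euclideanSpace_fin] at h1
    omega
  set Kv : Submodule ℝ 𝔼 := (Submodule.span ℝ {e})ᗮ with hKv
  let b : OrthonormalBasis (Fin n) ℝ Kv :=
    (stdOrthonormalBasis ℝ Kv).reindex (finCongr hfin)
  let ψ : EuclideanSpace ℝ (Fin n) →ₗᵢ[ℝ] 𝔼 :=
    Kv.subtypeₗᵢ.comp b.repr.symm.toLinearIsometry
  have hψnorm : ∀ z, ‖ψ z‖ = ‖z‖ := fun z => ψ.norm_map z
  set F : EuclideanSpace ℝ (Fin n) → 𝔼 :=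
    fun z => Real.sqrt (max (1 - ‖z‖ ^ 2) (4:ℝ)⁻¹) • e + ψ z with hF
  have hlip : LipschitzOnWith 3 F (closedBall 0 1) := by
    apply LipschitzOnWith.of_dist_le_mul
    intro z hz z' hz'
    have hz1 : ‖z‖ ≤ 1 := mem_closedBall_zero_iff.mp hz
    have hz1' : ‖z'‖ ≤ 1 := mem_closedBall_zero_iff.mp hz'
    set s := Real.sqrt (max (1 - ‖z‖ ^ 2) (4:ℝ)⁻¹) with hs
    set s' := Real.sqrt (max (1 - ‖z'‖ ^ 2) (4:ℝ)⁻¹) with hs'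
    have hFd : F z - F z' = (s - s') • e + (ψ z - ψ z') := by
      show (s • e + ψ z) - (s' • e + ψ z') = (s - s') • e + (ψ z - ψ z')
      module
    have hss : |s - s'| ≤ 2 * ‖z - z'‖ := by
      have h1 : |s - s'| ≤ |max (1 - ‖z‖ ^ 2) (4:ℝ)⁻¹ - max (1 - ‖z'‖ ^ 2) (4:ℝ)⁻¹| :=
        abs_sqrt_sub_sqrt_le (le_max_right _ _) (le_max_right _ _)
      have h2 : |max (1 - ‖z‖ ^ 2) (4:ℝ)⁻¹ - max (1 - ‖z'‖ ^ 2) (4:ℝ)⁻¹| ≤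
          |(1 - ‖z‖ ^ 2) - (1 - ‖z'‖ ^ 2)| := abs_max_sub_max_le_abs _ _ _
      have h3 : |(1 - ‖z‖ ^ 2) - (1 - ‖z'‖ ^ 2)| = |‖z‖ + ‖z'‖| * |‖z‖ - ‖z'‖| := by
        rw [← abs_mul, abs_sub_comm]
        congr 1
        ring
      have h4 : |‖z‖ + ‖z'‖| ≤ 2 := by
        rw [abs_of_nonneg (by positivity)]
        linarith
      have h5 : |‖z‖ - ‖z'‖| ≤ ‖z - z'‖ := abs_norm_sub_norm_le z z'
      calc |s - s'| ≤ |‖z‖ + ‖z'‖| * |‖z‖ - ‖z'‖| := by rw [← h3]; exact h1.trans h2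
        _ ≤ 2 * ‖z - z'‖ :=
          mul_le_mul h4 h5 (abs_nonneg _) (by norm_num)
    rw [dist_eq_norm, dist_eq_norm, hFd]
    calc ‖(s - s') • e + (ψ z - ψ z')‖ ≤ ‖(s - s') • e‖ + ‖ψ z - ψ z'‖ := norm_add_le _ _
      _ = |s - s'| + ‖z - z'‖ := by
          rw [norm_smul, he, mul_one, Real.norm_eq_abs, ← map_sub, hψnorm]
      _ ≤ 2 * ‖z - z'‖ + ‖z - z'‖ := by linarith
      _ = (3 : ℝ≥0) * ‖z - z'‖ := by push_cast; ring
  have hcap : {x : 𝔼 | x ∈ sphere (0:𝔼) 1 ∧ (2:ℝ)⁻¹ < ⟪e, x⟫} ⊆ F '' closedBall 0 1 := by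
    rintro x ⟨hx1, hx2⟩
    set c : ℝ := ⟪e, x⟫ with hc
    have hxn : ‖x‖ = 1 := mem_sphere_zero_iff_norm.mp hx1
    have hyK : x - c • e ∈ Kv := by
      rw [hKv]
      apply Submodule.mem_orthogonal_singleton_iff_inner_right.mpr
      rw [inner_sub_right, real_inner_smul_right, real_inner_self_eq_norm_sq, he]
      rw [← hc]
      ring
    set z := b.repr ⟨x - c • e, hyK⟩ with hz
    have hψz : ψ z = x - c • e := by
      show ((b.repr.symm (b.repr ⟨x - c • e, hyK⟩) : Kv) : 𝔼) = x - c • e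
      rw [b.repr.symm_apply_apply]
    have hznorm : ‖z‖ = ‖x - c • e‖ := by
      rw [hz, LinearIsometryEquiv.norm_map]
      rfl
    have hinner : ⟪x, c • e⟫ = c * c := by
      rw [real_inner_smul_right, real_inner_comm, ← hc]
    have hce : ‖c • e‖ ^ 2 = c ^ 2 := by
      rw [norm_smul, he, mul_one, Real.norm_eq_abs, sq_abs]
    have hy2 : ‖x - c • e‖ ^ 2 = 1 - c ^ 2 := by
      rw [norm_sub_sq_real, hxn, hinner, hce]
      ring
    have hcpos : (0:ℝ) < c := lt_trans (by norm_num) hx2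
    have hc2 : (4:ℝ)⁻¹ ≤ c ^ 2 := by nlinarith
    have hz2 : ‖z‖ ^ 2 = 1 - c ^ 2 := by rw [hznorm, hy2]
    have hmax : max (1 - ‖z‖ ^ 2) (4:ℝ)⁻¹ = c ^ 2 := by
      rw [hz2, show (1 : ℝ) - (1 - c ^ 2) = c ^ 2 by ring]
      exact max_eq_left hc2
    refine ⟨z, ?_, ?_⟩
    · rw [mem_closedBall_zero_iff]
      nlinarith [norm_nonneg z, sq_nonneg c]
    · show Real.sqrt (max (1 - ‖z‖ ^ 2) (4:ℝ)⁻¹) • e + ψ z = x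
      rw [hmax, Real.sqrt_sq hcpos.le, hψz]
      module
  have hd0 : (0:ℝ) ≤ (n : ℝ) := by positivity
  calc μH[(n : ℝ)] {x : 𝔼 | x ∈ sphere (0:𝔼) 1 ∧ (2:ℝ)⁻¹ < ⟪e, x⟫}
      ≤ μH[(n : ℝ)] (F '' closedBall 0 1) := measure_mono hcap
    _ ≤ (3 : ℝ≥0) ^ (n : ℝ) * μH[(n : ℝ)] (closedBall 0 1) :=
        hlip.hausdorffMeasure_image_le hd0
    _ < ⊤ := ENNReal.mul_lt_top (ENNReal.rpow_lt_top_of_nonneg hd0 ENNReal.coe_ne_top)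
        (closedBall_hausdorff_lt_top n)

lemma hausdorff_sphere_lt_top : μH[(n : ℝ)] (sphere (0:𝔼) 1) < ⊤ := by
  set U : sphere (0:𝔼) 1 → Set 𝔼 := fun e => {x | (2:ℝ)⁻¹ < ⟪(e : 𝔼), x⟫} with hU
  have hUopen : ∀ e, IsOpen (U e) := fun e =>
    isOpen_lt continuous_const (Continuous.inner continuous_const continuous_id)
  have hcov : sphere (0:𝔼) 1 ⊆ ⋃ e, U e := by
    intro x hx
    refine mem_iUnion.mpr ⟨⟨x, hx⟩, ?_⟩
    show (2:ℝ)⁻¹ < ⟪x, x⟫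
    rw [real_inner_self_eq_norm_sq, mem_sphere_zero_iff_norm.mp hx]
    norm_num
  obtain ⟨t, ht⟩ := (isCompact_sphere (0:𝔼) 1).elim_finite_subcover U hUopen hcov
  have hle : μH[(n : ℝ)] (sphere (0:𝔼) 1) ≤
      ∑ e ∈ t, μH[(n : ℝ)] {x : 𝔼 | x ∈ sphere (0:𝔼) 1 ∧ (2:ℝ)⁻¹ < ⟪(e : 𝔼), x⟫} := by
    refine le_trans (measure_mono ?_) (measure_biUnion_finset_le t _)
    intro x hx
    obtain ⟨e, het, he⟩ := mem_iUnion₂.mp (ht hx)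
    exact mem_iUnion₂.mpr ⟨e, het, hx, he⟩
  refine lt_of_le_of_lt hle (ENNReal.sum_lt_top.mpr fun e _ =>
    hausdorff_cap_lt_top (e : 𝔼) (mem_sphere_zero_iff_norm.mp e.2))

lemma hausdorff_translate (v : 𝔼) (s : Set 𝔼) :
    μH[(n : ℝ)] ((fun x => x + v) '' s) = μH[(n : ℝ)] s :=
  (Isometry.of_dist_eq fun a b => by
    simp only [dist_eq_norm, add_sub_add_right_eq_sub]).hausdorffMeasure_image
    (Or.inl (by positivity)) s

lemma hausdorff_sphere_any (q : 𝔼) :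
    μH[(n : ℝ)] (sphere q 1) = μH[(n : ℝ)] (sphere (0:𝔼) 1) := by
  have h : sphere q 1 = (fun x => x + q) '' sphere (0:𝔼) 1 := by
    ext z
    constructor
    · intro hz
      exact ⟨z - q, by simpa [mem_sphere_zero_iff_norm] using mem_sphere_iff_norm.mp hz,
        by module⟩
    · rintro ⟨x, hx, rfl⟩
      rw [mem_sphere_iff_norm]
      simpa using mem_sphere_zero_iff_norm.mp hx
  rw [h, hausdorff_translate]

/-! ### The semicontinuity statement -/

lemma solidAngle_le_liminf (C : Set 𝔼) (hconv : Convex ℝ C)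
    (hint : (interior C).Nonempty)
    (p : ℕ → 𝔼) (hp : ∀ i, p i ∈ C) (q : 𝔼) (hq : q ∈ C)
    (htend : Tendsto p atTop (nhds q)) :
    solidAngle C q ≤ Filter.liminf (fun i => solidAngle C (p i)) atTop := by
  set U := interior (tangentConeOf C q) with hUdef
  set B : ℕ → Set 𝔼 := fun i => sphere (p i) 1 ∩ interior (tangentConeOf C (p i)) with hBdef
  have hμsph : μH[(n : ℝ)] (sphere (0:𝔼) 1) < ⊤ := hausdorff_sphere_lt_top
  have hBfin : ∀ i, μH[(n : ℝ)] (B i) ≠ ⊤ := fun i =>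
    ((measure_mono inter_subset_left).trans_lt
      (by rw [hausdorff_sphere_any]; exact hμsph)).ne
  have hsa : ∀ i, solidAngle C (p i) = (μH[(n : ℝ)] (B i)).toReal := fun i => rfl
  set K : ℕ → Set 𝔼 :=
    fun m => sphere q 1 ∩ {x | ((m : ℝ≥0∞))⁻¹ ≤ EMetric.infEdist x Uᶜ} with hKdef
  have hKcomp : ∀ m, IsCompact (K m) := fun m =>
    (isCompact_sphere q 1).inter_right
      (isClosed_le continuous_const EMetric.continuous_infEdist)
  have hKsubU : ∀ m, K m ⊆ U := by
    intro m x hx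
    have hpos : 0 < EMetric.infEdist x Uᶜ :=
      lt_of_lt_of_le (ENNReal.inv_pos.mpr (ENNReal.natCast_ne_top m)) hx.2
    have h1 := EMetric.infEdist_pos_iff_notMem_closure.mp hpos
    by_contra hxU
    exact h1 (subset_closure hxU)
  have hAeq : sphere q 1 ∩ U = ⋃ m, K m := by
    apply subset_antisymm
    · rintro x ⟨hx1, hx2⟩
      have h1 : x ∉ closure Uᶜ := by
        rw [(isOpen_interior.isClosed_compl).closure_eq]
        exact fun h => h hx2
      obtain ⟨m, hm⟩ :=
        ENNReal.exists_inv_nat_lt (EMetric.infEdist_pos_iff_notMem_closure.mpr h1).ne'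
      exact mem_iUnion.mpr ⟨m, hx1, hm.le⟩
    · exact iUnion_subset fun m => subset_inter (fun x hx => hx.1) (hKsubU m)
  have hdir : Directed (· ⊆ ·) K := by
    apply Monotone.directed_le
    intro a b hab
    refine inter_subset_inter_right _ fun x hx => ?_
    have hx' : ((a : ℝ≥0∞))⁻¹ ≤ EMetric.infEdist x Uᶜ := hx
    show ((b : ℝ≥0∞))⁻¹ ≤ EMetric.infEdist x Uᶜ
    exact le_trans (ENNReal.inv_le_inv.mpr (by exact_mod_cast hab)) hx'
  set r := Filter.liminf (fun i => solidAngle C (p i)) atTop with hrdef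
  have hbdd : IsBoundedUnder (· ≤ ·) atTop (fun i => solidAngle C (p i)) := by
    refine isBoundedUnder_of ⟨(μH[(n : ℝ)] (sphere (0:𝔼) 1)).toReal, fun i => ?_⟩
    rw [hsa]
    calc (μH[(n : ℝ)] (B i)).toReal ≤ (μH[(n : ℝ)] (sphere (p i) 1)).toReal :=
        ENNReal.toReal_mono (by rw [hausdorff_sphere_any]; exact hμsph.ne)
          (measure_mono inter_subset_left)
      _ = (μH[(n : ℝ)] (sphere (0:𝔼) 1)).toReal := by rw [hausdorff_sphere_any]
  have hcob : IsCoboundedUnder (· ≥ ·) atTop (fun i => solidAngle C (p i)) :=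
    hbdd.isCoboundedUnder_ge
  have hr0 : 0 ≤ r :=
    le_liminf_of_le hcob (Eventually.of_forall fun i => ENNReal.toReal_nonneg)
  have hKle : ∀ m, μH[(n : ℝ)] (K m) ≤ ENNReal.ofReal r := by
    intro m
    have hKfin : μH[(n : ℝ)] (K m) ≠ ⊤ :=
      ((measure_mono (fun x hx => hx.1)).trans_lt
        (by rw [hausdorff_sphere_any]; exact hμsph)).ne
    rw [ENNReal.le_ofReal_iff_toReal_le hKfin hr0]
    apply le_liminf_of_le hcob
    obtain ⟨ε, hε, hball⟩ := key_compact hconv hq hint (hKcomp m) (hKsubU m)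
    have hev : ∀ᶠ i in atTop, dist (p i) q < ε :=
      (htend.eventually_mem (Metric.ball_mem_nhds q hε)).mono fun i hi => mem_ball.mp hi
    refine hev.mono fun i hi => ?_
    rw [hsa]
    apply ENNReal.toReal_mono (hBfin i)
    have himg : (fun x => x + (p i - q)) '' K m ⊆ B i := by
      rintro _ ⟨x, hx, rfl⟩
      refine ⟨?_, hball (p i) hi x hx⟩
      rw [mem_sphere_iff_norm]
      have h1 := mem_sphere_iff_norm.mp hx.1
      calc ‖x + (p i - q) - p i‖ = ‖x - q‖ := by congr 1; abel
        _ = 1 := h1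
    calc μH[(n : ℝ)] (K m) = μH[(n : ℝ)] ((fun x => x + (p i - q)) '' K m) :=
        (hausdorff_translate _ _).symm
      _ ≤ μH[(n : ℝ)] (B i) := measure_mono himg
  have hAle : μH[(n : ℝ)] (sphere q 1 ∩ U) ≤ ENNReal.ofReal r := by
    rw [hAeq, Directed.measure_iUnion hdir]
    exact iSup_le hKle
  have heq : solidAngle C q = (μH[(n : ℝ)] (sphere q 1 ∩ U)).toReal := rfl
  rw [heq]
  calc (μH[(n : ℝ)] (sphere q 1 ∩ U)).toReal ≤ (ENNReal.ofReal r).toReal :=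
      ENNReal.toReal_mono ENNReal.ofReal_ne_top hAle
    _ = r := ENNReal.toReal_ofReal hr0

end SolidAngle17

/-- The solid angle function of tangent cones of a convex body is lower
semicontinuous along sequences of boundary points; in particular the solid angle function
attains its minimum on the boundary. -/
theorem solidAngle_lower_semicontinuous {n : ℕ}
    (C : Set (EuclideanSpace ℝ (Fin (n + 1)))) (hC : IsConvexBody C) :
    (∀ p : ℕ → EuclideanSpace ℝ (Fin (n + 1)), (∀ i, p i ∈ frontier C) →
      ∀ q : EuclideanSpace ℝ (Fin (n + 1)), Tendsto p atTop (nhds q) →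
        solidAngle C q ≤ Filter.liminf (fun i => solidAngle C (p i)) atTop) ∧
    ∃ q ∈ frontier C, ∀ q' ∈ frontier C, solidAngle C q ≤ solidAngle C q' := by
  obtain ⟨hcomp, hconv, hint⟩ := hC
  have hCclosed : IsClosed C := hcomp.isClosed
  have hsubC : frontier C ⊆ C := by
    have h := frontier_subset_closure (s := C)
    rwa [hCclosed.closure_eq] at h
  have part1 : ∀ p : ℕ → EuclideanSpace ℝ (Fin (n + 1)), (∀ i, p i ∈ frontier C) →
      ∀ q : EuclideanSpace ℝ (Fin (n + 1)), Tendsto p atTop (nhds q) →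
        solidAngle C q ≤ Filter.liminf (fun i => solidAngle C (p i)) atTop := by
    intro p hpf q htend
    have hq : q ∈ C := by
      have h1 : q ∈ closure C :=
        mem_closure_of_tendsto htend (Eventually.of_forall fun i => hsubC (hpf i))
      rwa [hCclosed.closure_eq] at h1
    exact SolidAngle17.solidAngle_le_liminf C hconv hint p (fun i => hsubC (hpf i)) q hq htend
  refine ⟨part1, ?_⟩
  have hFne : (frontier C).Nonempty := by
    rw [nonempty_frontier_iff]
    obtain ⟨z, hz⟩ := hint
    haveI : NoncompactSpace (EuclideanSpace ℝ (Fin (n + 1))) :=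
      NormedSpace.noncompactSpace ℝ _
    exact ⟨⟨z, interior_subset hz⟩, hcomp.ne_univ⟩
  set S := solidAngle C '' frontier C with hSdef
  have hSne : S.Nonempty := hFne.image _
  have hSbdd : BddBelow S := by
    refine ⟨0, ?_⟩
    rintro a ⟨x, _, rfl⟩
    exact ENNReal.toReal_nonneg
  set m0 := sInf S with hm0def
  have hex : ∀ k : ℕ, ∃ x, x ∈ frontier C ∧ solidAngle C x < m0 + ((k : ℝ) + 1)⁻¹ := by
    intro k
    have h1 : m0 < m0 + ((k : ℝ) + 1)⁻¹ := lt_add_of_pos_right _ (by positivity)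
    obtain ⟨a, ⟨x, hxF, rfl⟩, ha⟩ := exists_lt_of_csInf_lt hSne h1
    exact ⟨x, hxF, ha⟩
  choose x hxF hxlt using hex
  have hFcomp : IsCompact (frontier C) :=
    hcomp.of_isClosed_subset isClosed_frontier hsubC
  obtain ⟨q, hqF, φ, hφ, hconv'⟩ := hFcomp.tendsto_subseq hxF
  refine ⟨q, hqF, fun q' hq' => ?_⟩
  have h1 : solidAngle C q ≤ Filter.liminf (fun k => solidAngle C ((x ∘ φ) k)) atTop :=
    part1 (x ∘ φ) (fun k => hxF (φ k)) q hconv'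
  have hle : ∀ k, solidAngle C ((x ∘ φ) k) ≤ m0 + ((k : ℝ) + 1)⁻¹ := by
    intro k
    have h2 : ((k : ℝ) + 1)⁻¹ ≥ ((φ k : ℝ) + 1)⁻¹ := by
      apply inv_anti₀ (by positivity)
      have : (k : ℝ) ≤ (φ k : ℝ) := by exact_mod_cast hφ.le_apply
      linarith
    have h3 := (hxlt (φ k)).le
    simp only [Function.comp_apply]
    linarith
  have htendv : Tendsto (fun k : ℕ => m0 + ((k : ℝ) + 1)⁻¹) atTop (nhds m0) := by
    have h4 := tendsto_one_div_add_atTop_nhds_zero_nat (𝕜 := ℝ)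
    have h5 : Tendsto (fun k : ℕ => m0 + 1 / ((k : ℝ) + 1)) atTop (nhds (m0 + 0)) :=
      tendsto_const_nhds.add h4
    rw [add_zero] at h5
    simpa [one_div] using h5
  have h2 : Filter.liminf (fun k => solidAngle C ((x ∘ φ) k)) atTop ≤ m0 := by
    have hbdd : IsBoundedUnder (· ≥ ·) atTop (fun k => solidAngle C ((x ∘ φ) k)) :=
      isBoundedUnder_of ⟨0, fun k => ENNReal.toReal_nonneg⟩
    have hcob : IsCoboundedUnder (· ≥ ·) atTop (fun k : ℕ => m0 + ((k : ℝ) + 1)⁻¹) := by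
      refine (isBoundedUnder_of ⟨m0 + 1, fun k => ?_⟩).isCoboundedUnder_ge
      have : ((k : ℝ) + 1)⁻¹ ≤ 1 := by
        rw [inv_le_one_iff₀]; right; linarith [Nat.cast_nonneg (α := ℝ) k]
      linarith
    calc Filter.liminf (fun k => solidAngle C ((x ∘ φ) k)) atTop
        ≤ Filter.liminf (fun k : ℕ => m0 + ((k : ℝ) + 1)⁻¹) atTop :=
          liminf_le_liminf (Eventually.of_forall hle) hbdd hcob
      _ = m0 := htendv.liminf_eq
  have h3 : m0 ≤ solidAngle C q' := csInf_le hSbdd ⟨q', hq', rfl⟩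
  linarith
end
end
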